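/- Let G be a group with identity e and H ≤ G a subgroup. For n ≥ 0 consider: (L) the quotient G^{n+1}/H^{n+1} of G^{n+1} by the right H^{n+1}-action (g₀,…,g_n)·(h₀,…,h_n) = (h₀⁻¹g₀h₁, h₁⁻¹g₁h₂, …, h_n⁻¹g_nh₀); and (R) the quotient G∖(ad(G) × (G/H)^{n+1}) of ad(G) × (G/H)^{n+1} by the left G-action g·(g̃, g₀H, …, g_nH) = (g g̃ g⁻¹, g g₀H, …, g g_nH). Then the maps Φ: [g₀, g₁, …, g_n] ↦ [g₀g₁⋯g_n; g₀H, g₀g₁H, …, g₀g₁⋯g_nH] and Ψ: [g̃; g₀H, g₁H, …, g_nH] ↦ [g_n⁻¹ g̃ g₀, g₀⁻¹g₁, g₁⁻¹g₂, …, g_{n-1}⁻¹g_n] are well defined (independent of representatives), mutually inverse bijections between (L) and (R), and they intertwine: the cofaces δ_i[g₀,…,g_n] = [g₀,…,g_{i-1}, e, g_i,…,g_n], codegeneracies σ_i[g₀,…,g_n] = [g₀,…,g_ig_{i+1},…,g_n], and cocyclic operator τ_n[g₀,g₁,…,g_n] = [g₁,…,g_n,g₀] on (L), with the cofaces δ_i[g̃,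 g₀H,…,g_nH] = [g̃, g₀H,…,g_iH, g_iH,…,g_nH], codegeneracies σ_i[g̃, g₀H,…,g_nH] = [g̃, g₀H,…,g_{i-1}H, g_{i+1}H,…,g_nH], and cocyclic operator τ_n[g̃, g₀H,…,g_nH] = [g̃, g₁H,…,g_nH, g̃g₀H] on (R). -/

import Mathlib

/-!
STATEMENT 16: For a group `G`, a subgroup `H` and `n ≥ 0`, the maps
`Φ[g₀,…,g_n] = [g₀⋯g_n; g₀H, g₀g₁H, …, g₀⋯g_nH]` and
`Ψ[g̃; g₀H,…,g_nH] = [g_n⁻¹g̃g₀, g₀⁻¹g₁, …, g_{n-1}⁻¹g_n]`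
are well defined, mutually inverse bijections between
(L) `G^{n+1}/H^{n+1}` (right action `(g₀,…,g_n)·(h₀,…,h_n) = (h₀⁻¹g₀h₁,…,h_n⁻¹g_nh₀)`) and
(R) `G∖(ad(G) × (G/H)^{n+1})` (action `g·(g̃,x) = (gg̃g⁻¹, gx)`), and they intertwine the
cocyclic structures (cofaces inserting `e` resp. duplicating a coset, codegeneracies
multiplying adjacent entries resp. deleting a coset, and the cyclic rotations).
-/

variable {G : Type*} [Group G] (H : Subgroup G)

/-- The orbit equivalence of the right `H^{n+1}`-action on `G^{n+1}`. -/
def lrel (n : ℕ) : Setoid (Fin (n + 1) → G) where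
  r a b := ∃ h : Fin (n + 1) → G, (∀ i, h i ∈ H) ∧ ∀ i, b i = (h i)⁻¹ * a i * h (i + 1)
  iseqv := by
    constructor
    · exact fun a => ⟨fun _ => 1, fun _ => H.one_mem, by simp⟩
    · rintro a b ⟨h, hm, he⟩
      exact ⟨fun i => (h i)⁻¹, fun i => H.inv_mem (hm i), fun i => by rw [he i]; group⟩
    · rintro a b c ⟨h, hm, he⟩ ⟨h', hm', he'⟩
      exact ⟨fun i => h i * h' i, fun i => H.mul_mem (hm i) (hm' i),
        fun i => by rw [he' i, he i]; group⟩

/-- The orbit equivalence of the `G`-action `g·(g̃, x) = (g g̃ g⁻¹, g • x)` on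
`ad(G) × (G/H)^{n+1}`. -/
def rrel (n : ℕ) : Setoid (G × (Fin (n + 1) → G ⧸ H)) where
  r a b := ∃ g : G, b = (g * a.1 * g⁻¹, fun i => g • a.2 i)
  iseqv := by
    constructor
    · exact fun a => ⟨1, by simp⟩
    · rintro ⟨a₁, a₂⟩ b ⟨g, rfl⟩
      refine ⟨g⁻¹, Prod.ext (by group) ?_⟩
      funext i; simp [smul_smul]
    · rintro ⟨a₁, a₂⟩ b c ⟨g, rfl⟩ ⟨g', rfl⟩
      refine ⟨g' * g, Prod.ext (by group) ?_⟩
      funext i; simp [smul_smul]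

/-- (L):  `G^{n+1}/H^{n+1}`. -/
def QL (n : ℕ) := Quotient (lrel H n)

/-- (R):  `G∖(ad(G) × (G/H)^{n+1})`. -/
def QR (n : ℕ) := Quotient (rrel H n)

/-- partial products `g₀g₁⋯g_i`. -/
def pprod {n : ℕ} (g : Fin (n + 1) → G) (i : Fin (n + 1)) : G :=
  ((List.ofFn g).take ((i : ℕ) + 1)).prod

/-- representative-level `Ψ`: `(g̃, (g₀,…,g_n)) ↦ (g_n⁻¹g̃g₀, g₀⁻¹g₁, …, g_{n-1}⁻¹g_n)`. -/
def psiRep {n : ℕ} (gt : G) (x : Fin (n + 1) → G) : Fin (n + 1) → G :=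
  fun i => if i = 0 then (x (Fin.last n))⁻¹ * gt * x 0 else (x (i - 1))⁻¹ * x i

/-- merging adjacent entries `(g₀,…,g_ig_{i+1},…,g_{n+1})`. -/
def mergeAt {n : ℕ} (i : Fin (n + 1)) (g : Fin (n + 2) → G) : Fin (n + 1) → G :=
  fun j => if (j : ℕ) < (i : ℕ) then g j.castSucc
    else if j = i then g i.castSucc * g i.succ else g j.succ

/-!
Write `p = (1, g₀, g₀g₁, …, g₀⋯g_n)` for the partial products of `g`, so that
`Φ[g] = [p_{n+1}; p₁H, …, p_{n+1}H]`. `Ψ` lists the successive quotients of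
`(g̃⁻¹x_n, x₀, …, x_n)`, which for `x_i = p_{i+1}` and `g̃ = p_{n+1}` is `p` itself: thus
`Ψ ∘ Φ = id` already on representatives, while `Φ ∘ Ψ` moves a representative by `x_n⁻¹g̃`.
The twist `g_i ↦ h_i⁻¹g_ih_{i+1}` turns `p_i` into `h₀⁻¹p_ih_i` (indices of `h` taken cyclically),
which acts on the cosets by `h₀⁻¹` and on `p_{n+1}` by conjugation, so `Φ` descends.
The operators on (R) are visibly `G`-equivariant; those on (L) are transported along `Φ`, and
their formulas record how `p` changes when `e` is inserted (an entry repeats), when neighbours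
are multiplied (an entry is dropped) and under rotation (`p` is shifted and translated by `g₀⁻¹`).
-/

namespace Fin

variable {n : ℕ}

theorem snoc_tail_eq_ite {α : Type*} (x : Fin (n + 1) → α) (a : α) :
    (snoc (tail x) a : Fin (n + 1) → α) =
      fun i : Fin (n + 1) => if (i : ℕ) = n then a else x (i + 1) := by
  funext i
  induction i using lastCases with
  | last => simp
  | cast j => simp [tail, coeSucc_eq_succ, j.isLt.ne]

theorem snoc_tail_zero {α : Type*} (x : Fin (n + 1) → α) :
    (snoc (tail x) (x 0) : Fin (n + 1) → α) = fun i => x (i + 1) := by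
  rw [snoc_tail_eq_ite]
  funext i
  split_ifs with h
  · rw [show i = last n from Fin.ext h, last_add_one]
  · rfl

theorem snoc_self_zero_succ {α : Type*} (x : Fin (n + 1) → α) (i : Fin (n + 1)) :
    (snoc x (x 0) : Fin (n + 2) → α) i.succ = x (i + 1) := by
  induction i using lastCases with
  | last => simp
  | cast j => rw [succ_castSucc, snoc_castSucc, coeSucc_eq_succ]

theorem predAbove_castSucc_succAbove (j : Fin (n + 2)) (l : Fin (n + 1)) :
    j.predAbove (j.succAbove l).castSucc = l.castSucc := by
  rcases lt_or_ge l.castSucc j with h | h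
  · rw [succAbove_of_castSucc_lt _ _ h,
      predAbove_of_le_castSucc _ _ (castSucc_le_castSucc_iff.2 h.le)]
    rfl
  · rw [succAbove_of_le_castSucc _ _ h, predAbove_of_castSucc_lt _ _
      (by simp only [lt_def, le_def, val_castSucc, val_succ] at h ⊢; omega)]
    simp

theorem predAbove_succ_succAbove (j : Fin (n + 2)) (l : Fin (n + 1)) :
    j.predAbove (j.succAbove l).succ = l.succ := by
  rcases lt_or_ge l.castSucc j with h | h
  · rw [succAbove_of_castSucc_lt _ _ h, predAbove_of_le_castSucc _ _
      (by simp only [lt_def, le_def, val_castSucc, val_succ] at h ⊢; omega)]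
    rfl
  · rw [succAbove_of_le_castSucc _ _ h, predAbove_of_castSucc_lt _ _
      (by simp only [lt_def, le_def, val_castSucc, val_succ] at h ⊢; omega)]
    simp

theorem predAbove_last_succ (j : Fin (n + 1)) : j.predAbove (last (n + 1)) = last n := by
  rw [predAbove_of_castSucc_lt _ _ (castSucc_lt_last j), pred_last]

variable {M : Type*} [Monoid M]

theorem partialProd_last (g : Fin n → M) : partialProd g (last n) = (List.ofFn g).prod := by
  simp [partialProd, List.take_of_length_le]

theorem partialProd_insertNth_one (g : Fin (n + 1) → M) (j : Fin (n + 2)) :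
    partialProd (insertNth j 1 g) = partialProd g ∘ j.predAbove := by
  ext l
  induction l using inductionOn with
  | zero => simp [predAbove_of_le_castSucc]
  | succ l ih =>
    rw [partialProd_succ, ih]
    rcases eq_self_or_eq_succAbove j l with rfl | ⟨l, rfl⟩
    · simp [predAbove_castSucc_self, predAbove_succ_self]
    · simp [predAbove_castSucc_succAbove, predAbove_succ_succAbove, partialProd_succ]

theorem mul_partialProd_rotate (g : Fin (n + 1) → M) (i : Fin (n + 1)) :
    g 0 * partialProd (fun j => g (j + 1)) i.succ =
      if (i : ℕ) = n then partialProd g (last _) * g 0 else partialProd g (i + 1).succ := by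
  refine Eq.trans ?_ (congrFun (snoc_tail_eq_ite (fun j => partialProd g j.succ) _) i)
  rw [← snoc_tail_zero]
  induction i using lastCases with
  | last =>
    rw [partialProd_succ, ← partialProd_init, init_snoc, snoc_last, snoc_last, ← mul_assoc,
      ← partialProd_succ']
    rfl
  | cast j =>
    rw [succ_castSucc, ← partialProd_init, init_snoc, snoc_castSucc, ← partialProd_succ']
    rfl

variable {G : Type*} [Group G]

theorem partialProd_conj (k : Fin (n + 1) → G) (a : Fin n → G) (l : Fin (n + 1)) :
    partialProd (fun i => (k i.castSucc)⁻¹ * a i * k i.succ) l =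
      (k 0)⁻¹ * partialProd a l * k l := by
  induction l using inductionOn with
  | zero => simp
  | succ l ih => rw [partialProd_succ, partialProd_succ, ih]; group

theorem partialProd_inv_mul_succ (f : Fin (n + 1) → G) (l : Fin (n + 1)) :
    partialProd (fun i => (f i.castSucc)⁻¹ * f i.succ) l = (f 0)⁻¹ * f l := by
  rw [eq_inv_mul_iff_mul_eq]
  exact congrFun (partialProd_left_inv f) l

end Fin

open Fin

section Representatives

variable {H} {n : ℕ}

theorem mergeAt_eq_contractNth (i : Fin (n + 1)) (g : Fin (n + 2) → G) :
    mergeAt i g = contractNth i.castSucc (· * ·) g := by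
  funext k
  by_cases hk : k = i
  · subst hk
    simp [mergeAt, contractNth]
  · simp [mergeAt, contractNth, Fin.val_eq_val, hk]

/-- `k` extends the twisting tuple cyclically by `k (n + 1) = k 0`, which removes the wrap-around of
`i + 1` in `Fin (n + 1)`. -/
theorem lrel_iff {a b : Fin (n + 1) → G} :
    lrel H n a b ↔ ∃ k : Fin (n + 2) → G, (∀ i, k i ∈ H) ∧ k (last _) = k 0 ∧
      ∀ i, b i = (k i.castSucc)⁻¹ * a i * k i.succ := by
  constructor
  · rintro ⟨h, hH, hb⟩
    refine ⟨snoc h (h 0), fun i => ?_, by simp, fun i => ?_⟩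
    · induction i using lastCases <;> simp [hH]
    · rw [hb, snoc_castSucc, snoc_self_zero_succ]
  · rintro ⟨k, hH, hcyc, hb⟩
    have hk : k = snoc (init k) (init k 0) := by
      rw [init, castSucc_zero, ← hcyc, snoc_init_self]
    refine ⟨init k, fun i => hH _, fun i => ?_⟩
    rw [hb, ← snoc_self_zero_succ (init k) i, ← hk]
    rfl

theorem psiRep_eq (gt : G) (x : Fin (n + 1) → G) :
    psiRep gt x = fun i =>
      ((cons (gt⁻¹ * x (last n)) x : Fin (n + 2) → G) i.castSucc)⁻¹ *
        (cons (gt⁻¹ * x (last n)) x : Fin (n + 2) → G) i.succ := by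
  funext i
  induction i using Fin.cases with
  | zero => simp [psiRep, mul_assoc]
  | succ j =>
    rw [psiRep, if_neg (succ_ne_zero j), ← coeSucc_eq_succ, add_sub_cancel_right,
      coeSucc_eq_succ, ← succ_castSucc, cons_succ, cons_succ]

theorem psiRep_partialProd (g : Fin (n + 1) → G) :
    psiRep (partialProd g (last (n + 1))) (fun i => partialProd g i.succ) = g := by
  rw [psiRep_eq, succ_last, inv_mul_cancel, ← partialProd_zero g]
  have : (cons (partialProd g 0) fun i => partialProd g i.succ : Fin (n + 2) → G) =
      partialProd g := cons_self_tail _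
  rw [this]
  exact funext (partialProd_right_inv g)

theorem partialProd_psiRep (gt : G) (x : Fin (n + 1) → G) (i : Fin (n + 1)) :
    partialProd (psiRep gt x) i.succ = (x (last n))⁻¹ * gt * x i := by
  rw [psiRep_eq, partialProd_inv_mul_succ]
  simp [mul_assoc]

theorem psiRep_conj (g gt : G) (x : Fin (n + 1) → G) :
    psiRep (g * gt * g⁻¹) (fun i => g * x i) = psiRep gt x := by
  simp only [psiRep_eq]
  funext i
  induction i using Fin.cases <;> simp [mul_assoc]

theorem psiRep_mul_right (gt : G) (x k : Fin (n + 1) → G) (i : Fin (n + 1)) :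
    psiRep gt (fun i => x i * k i) i =
      ((cons (k (last n)) k : Fin (n + 2) → G) i.castSucc)⁻¹ * psiRep gt x i *
        (cons (k (last n)) k : Fin (n + 2) → G) i.succ := by
  simp only [psiRep_eq]
  induction i using Fin.cases <;> simp <;> group

theorem lrel_psiRep_of_mk_eq (gt : G) {x y : Fin (n + 1) → G}
    (hxy : ∀ i, (x i : G ⧸ H) = y i) : lrel H n (psiRep gt x) (psiRep gt y) := by
  have hk (i : Fin (n + 1)) : (x i)⁻¹ * y i ∈ H := QuotientGroup.eq.1 (hxy i)
  have hy : y = fun i => x i * ((x i)⁻¹ * y i) := by simp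
  rw [hy]
  refine lrel_iff.2 ⟨cons _ _, fun i => ?_, cons_last _ _, psiRep_mul_right gt x _⟩
  induction i using Fin.cases <;> simp [hk]

end Representatives

theorem QuotientGroup.mk_mul_out {G : Type*} [Group G] {H : Subgroup G} (g : G) (q : G ⧸ H) :
    (QuotientGroup.mk (g * q.out) : G ⧸ H) = g • q := by
  rw [← smul_eq_mul, ← MulAction.Quotient.smul_mk, QuotientGroup.out_eq']

section Operators

variable {H} {n m k : ℕ}

def phiRep (g : Fin (n + 1) → G) : G × (Fin (n + 1) → G ⧸ H) :=
  (partialProd g (last (n + 1)), fun i => QuotientGroup.mk (partialProd g i.succ))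

theorem rrel_phiRep_of_lrel {a b : Fin (n + 1) → G} (hab : lrel H n a b) :
    rrel H n (phiRep a) (phiRep b) := by
  obtain ⟨k, hH, hcyc, hb⟩ := lrel_iff.1 hab
  obtain rfl : b = _ := funext hb
  refine ⟨(k 0)⁻¹, Prod.ext ?_ (funext fun i => ?_)⟩
  · simp only [phiRep, partialProd_conj, hcyc, inv_inv]
  · simp only [phiRep, partialProd_conj, QuotientGroup.mk_mul_of_mem _ (hH _)]
    rfl

theorem lrel_psiRep_of_rrel {p q : G × (Fin (n + 1) → G ⧸ H)} (hpq : rrel H n p q) :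
    lrel H n (psiRep p.1 fun i => (p.2 i).out) (psiRep q.1 fun i => (q.2 i).out) := by
  obtain ⟨g, rfl⟩ := hpq
  rw [← psiRep_conj g]
  refine lrel_psiRep_of_mk_eq _ fun i => ?_
  change (QuotientGroup.mk (g * (p.2 i).out) : G ⧸ H) = QuotientGroup.mk (g • p.2 i).out
  rw [QuotientGroup.out_eq', QuotientGroup.mk_mul_out]

noncomputable def phiEquiv (n : ℕ) : QL H n ≃ QR H n where
  toFun := Quotient.map phiRep fun _ _ => rrel_phiRep_of_lrel
  invFun := Quotient.lift (fun p => Quotient.mk _ (psiRep p.1 fun i => (p.2 i).out))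
    fun _ _ hpq => Quotient.sound (lrel_psiRep_of_rrel hpq)
  left_inv := by
    rintro ⟨g⟩
    exact (Quotient.sound (lrel_psiRep_of_mk_eq _ fun i => QuotientGroup.out_eq' _)).trans
      (congrArg _ (psiRep_partialProd g))
  right_inv := by
    rintro ⟨gt, x⟩
    refine Quotient.sound ((rrel H n).symm
      ⟨((x (last n)).out)⁻¹ * gt, Prod.ext ?_ (funext fun i => ?_)⟩)
    · simp only [phiRep, ← succ_last, partialProd_psiRep]
      group
    · simp only [phiRep, partialProd_psiRep, QuotientGroup.mk_mul_out]

theorem phiEquiv_mk (g : Fin (m + 1) → G) :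
    phiEquiv m (Quotient.mk (lrel H m) g) =
      Quotient.mk (rrel H m) ((List.ofFn g).prod, fun i => QuotientGroup.mk (pprod g i)) :=
  congrArg (Quotient.mk _) (Prod.ext (partialProd_last g) rfl)

theorem phiEquiv_symm_mk (gt : G) (x : Fin (m + 1) → G) :
    (phiEquiv m).symm (Quotient.mk _ (gt, fun i => (x i : G ⧸ H))) =
      Quotient.mk _ (psiRep gt x) :=
  Quotient.sound (lrel_psiRep_of_mk_eq gt fun i => by simp)

def QR.map (f : G × (Fin (m + 1) → G ⧸ H) → G × (Fin (k + 1) → G ⧸ H))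
    (hf : ∀ g p, f (g * p.1 * g⁻¹, fun i => g • p.2 i) =
      (g * (f p).1 * g⁻¹, fun i => g • (f p).2 i)) :
    QR H m → QR H k :=
  Quotient.map f fun p _ ⟨g, hq⟩ => ⟨g, hq ▸ hf g p⟩

def QR.coface (m : ℕ) (i : Fin (m + 1)) : QR H m → QR H (m + 1) :=
  QR.map (fun p => (p.1, p.2 ∘ predAbove i)) fun _ _ => rfl

/-- The coface `δ₀` of (R), matching the coface of (L) that inserts `e` in front. -/
def QR.cofaceCyclic (m : ℕ) : QR H m → QR H (m + 1) :=
  QR.map (fun p => (p.1, cons (p.1⁻¹ • p.2 (last m)) p.2)) fun g p => by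
    refine Prod.ext rfl (funext fun i => ?_)
    induction i using Fin.cases <;> simp [smul_smul, mul_assoc]

def QR.codegeneracy (m : ℕ) (i : Fin (m + 1)) : QR H (m + 1) → QR H m :=
  QR.map (fun p => (p.1, p.2 ∘ succAbove i.castSucc)) fun _ _ => rfl

def QR.cyclic (m : ℕ) : QR H m → QR H m :=
  QR.map (fun p => (p.1, fun i => if (i : ℕ) = m then p.1 • p.2 0 else p.2 (i + 1)))
    fun g p => by
      refine Prod.ext rfl (funext fun i => ?_)
      dsimp only
      split_ifs <;> simp [smul_smul, mul_assoc]

noncomputable def QL.transport (f : QR H m → QR H k) : QL H m → QL H k :=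
  (phiEquiv k).symm ∘ f ∘ phiEquiv m

theorem phiEquiv_transport (f : QR H m → QR H k) (c : QL H m) :
    phiEquiv k (QL.transport f c) = f (phiEquiv m c) :=
  (phiEquiv k).apply_symm_apply _

theorem QL.transport_mk {f : QR H m → QR H k} {a : Fin (m + 1) → G} {b : Fin (k + 1) → G}
    (h : f (phiEquiv m (Quotient.mk _ a)) = phiEquiv k (Quotient.mk _ b)) :
    QL.transport f (Quotient.mk _ a) = Quotient.mk _ b :=
  (Equiv.symm_apply_eq _).2 h

theorem QR.coface_phiEquiv_mk (i : Fin (m + 1)) (g : Fin (m + 1) → G) :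
    QR.coface m i (phiEquiv m (Quotient.mk (lrel H m) g)) =
      phiEquiv (m + 1) (Quotient.mk _ (insertNth i.succ 1 g)) := by
  refine congrArg (Quotient.mk _) (Prod.ext ?_ (funext fun j => ?_)) <;>
    simp [phiRep, partialProd_insertNth_one, succ_predAbove_succ]

theorem QR.cofaceCyclic_phiEquiv_mk (g : Fin (m + 1) → G) :
    QR.cofaceCyclic m (phiEquiv m (Quotient.mk (lrel H m) g)) =
      phiEquiv (m + 1) (Quotient.mk _ (insertNth 0 1 g)) := by
  refine congrArg (Quotient.mk _) (Prod.ext ?_ (funext fun j => ?_))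
  · simp only [phiRep, partialProd_insertNth_one, Function.comp_apply, predAbove_last_succ]
  · simp only [phiRep, partialProd_insertNth_one, Function.comp_apply]
    induction j using Fin.cases <;> simp [MulAction.Quotient.smul_mk]

theorem QR.codegeneracy_phiEquiv_mk (i : Fin (m + 1)) (g : Fin (m + 2) → G) :
    QR.codegeneracy m i (phiEquiv (m + 1) (Quotient.mk (lrel H (m + 1)) g)) =
      phiEquiv m (Quotient.mk _ (mergeAt i g)) := by
  refine congrArg (Quotient.mk _) (Prod.ext ?_ (funext fun j => ?_)) <;>
    simp [phiRep, mergeAt_eq_contractNth, partialProd_contractNth, succ_succAbove_succ]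

theorem QR.cyclic_phiEquiv_mk (g : Fin (m + 1) → G) :
    QR.cyclic m (phiEquiv m (Quotient.mk (lrel H m) g)) =
      phiEquiv m (Quotient.mk _ fun i => g (i + 1)) := by
  refine Quotient.sound ((rrel H m).symm ⟨g 0, Prod.ext ?_ (funext fun i => ?_)⟩)
  · have hlast := mul_partialProd_rotate g (last m)
    rw [if_pos (val_last m)] at hlast
    simp only [phiRep, ← succ_last, hlast, mul_inv_cancel_right]
  · simp only [phiRep, MulAction.Quotient.smul_mk, smul_eq_mul, mul_partialProd_rotate]
    split_ifs
    · rw [partialProd_succ]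
      simp
    · rfl

noncomputable def QL.coface (m : ℕ) : Fin (m + 2) → QL H m → QL H (m + 1) :=
  Fin.cases (QL.transport (QR.cofaceCyclic m)) fun i => QL.transport (QR.coface m i)

noncomputable def QL.codegeneracy (m : ℕ) (i : Fin (m + 1)) : QL H (m + 1) → QL H m :=
  QL.transport (QR.codegeneracy m i)

noncomputable def QL.cyclic (m : ℕ) : QL H m → QL H m :=
  QL.transport (QR.cyclic m)

theorem QL.coface_mk (i : Fin (m + 2)) (g : Fin (m + 1) → G) :
    QL.coface m i (Quotient.mk (lrel H m) g) = Quotient.mk _ (insertNth i 1 g) := by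
  induction i using Fin.cases with
  | zero => exact QL.transport_mk (QR.cofaceCyclic_phiEquiv_mk g)
  | succ i => exact QL.transport_mk (QR.coface_phiEquiv_mk i g)

end Operators

theorem takeuchi_galois_cocyclic_quotient_iso :
    ∃ (Φ : ∀ m, QL H m → QR H m) (Ψ : ∀ m, QR H m → QL H m),
      -- Φ is well defined with the stated formula
      (∀ m (g : Fin (m + 1) → G),
        Φ m (Quotient.mk (lrel H m) g) =
          Quotient.mk (rrel H m)
            ((List.ofFn g).prod, fun i => (QuotientGroup.mk (pprod g i) : G ⧸ H))) ∧
      -- Ψ is well defined with the stated formula (on arbitrary coset representatives)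
      (∀ m (gt : G) (x : Fin (m + 1) → G),
        Ψ m (Quotient.mk (rrel H m) (gt, fun i => (QuotientGroup.mk (x i) : G ⧸ H))) =
          Quotient.mk (lrel H m) (psiRep gt x)) ∧
      -- mutually inverse bijections
      (∀ m, Function.LeftInverse (Ψ m) (Φ m) ∧ Function.RightInverse (Ψ m) (Φ m)) ∧
      -- the cocyclic structure maps descend to the quotients and are intertwined
      ∃ (δL : ∀ m, Fin (m + 2) → QL H m → QL H (m + 1))
        (σL : ∀ m, Fin (m + 1) → QL H (m + 1) → QL H m)
        (τL : ∀ m, QL H m → QL H m)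
        (δR : ∀ m, Fin (m + 1) → QR H m → QR H (m + 1))
        (σR : ∀ m, Fin (m + 1) → QR H (m + 1) → QR H m)
        (τR : ∀ m, QR H m → QR H m),
        -- cofaces on (L): insert the identity `e` at slot `i`
        (∀ m (i : Fin (m + 2)) (g : Fin (m + 1) → G),
          δL m i (Quotient.mk (lrel H m) g) =
            Quotient.mk (lrel H (m + 1)) (Fin.insertNth i 1 g)) ∧
        -- codegeneracies on (L): merge adjacent entries
        (∀ m (i : Fin (m + 1)) (g : Fin (m + 2) → G),
          σL m i (Quotient.mk (lrel H (m + 1)) g) =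
            Quotient.mk (lrel H m) (mergeAt i g)) ∧
        -- cyclic rotation on (L)
        (∀ m (g : Fin (m + 1) → G),
          τL m (Quotient.mk (lrel H m) g) =
            Quotient.mk (lrel H m) (fun i => g (i + 1))) ∧
        -- cofaces on (R): duplicate the coset at slot `i`
        (∀ m (i : Fin (m + 1)) (gt : G) (x : Fin (m + 1) → G ⧸ H),
          δR m i (Quotient.mk (rrel H m) (gt, x)) =
            Quotient.mk (rrel H (m + 1)) (gt, x ∘ Fin.predAbove i)) ∧
        -- codegeneracies on (R): delete the coset at slot `i`
        (∀ m (i : Fin (m + 1)) (gt : G) (x : Fin (m + 2) → G ⧸ H),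
          σR m i (Quotient.mk (rrel H (m + 1)) (gt, x)) =
            Quotient.mk (rrel H m) (gt, x ∘ Fin.succAbove i.castSucc)) ∧
        -- cyclic operator on (R): `τ[g̃, x₀,…,x_m] = [g̃, x₁,…,x_m, g̃x₀]`
        (∀ m (gt : G) (x : Fin (m + 1) → G ⧸ H),
          τR m (Quotient.mk (rrel H m) (gt, x)) =
            Quotient.mk (rrel H m)
              (gt, fun i => if (i : ℕ) = m then gt • x 0 else x (i + 1))) ∧
        -- intertwining (note the cyclic re-indexing of the cofaces)
        (∀ m (i : Fin (m + 1)) (c : QL H m),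
          Φ (m + 1) (δL m i.succ c) = δR m i (Φ m c)) ∧
        (∀ m (i : Fin (m + 1)) (c : QL H (m + 1)),
          Φ m (σL m i c) = σR m i (Φ (m + 1) c)) ∧
        (∀ m (c : QL H m), Φ m (τL m c) = τR m (Φ m c)) := by
  
  refine ⟨fun m => phiEquiv m, fun m => (phiEquiv m).symm,
    fun m => phiEquiv_mk, fun m => phiEquiv_symm_mk,
    fun m => ⟨(phiEquiv m).left_inv, (phiEquiv m).right_inv⟩,
    QL.coface, QL.codegeneracy, QL.cyclic, QR.coface, QR.codegeneracy, QR.cyclic,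
    fun m => QL.coface_mk, fun m i g => QL.transport_mk (QR.codegeneracy_phiEquiv_mk i g),
    fun m g => QL.transport_mk (QR.cyclic_phiEquiv_mk g),
    fun _ _ _ _ => rfl, fun _ _ _ _ => rfl, fun _ _ _ => rfl,
    fun m i => phiEquiv_transport _, fun m i => phiEquiv_transport _,
    fun m => phiEquiv_transport _⟩
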